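/- arXiv:2604.11819 — 9 statements merged into one kernel-verified Lean document; each statement's English description precedes it below -/
import Mathlib

section
/- For any real numbers t₁, t₂, c₁, c₂, with z_j = min(t_j, c_j), δ_j = 1{t_j ≤ c_j} (j = 1,2), t* = min(t₁,t₂), c* = min(c₁,c₂), δ* = 1{t* ≤ c*}, and η = 0, 1, 2 according as z₁ = z₂, z₁ > z₂, z₁ < z₂: one has δ* = 1 if and only if (η = 1 and δ₂ = 1) or (η = 2 and δ₁ = 1) or (η = 0 and (δ₁ = 1 or δ₂ = 1)). -/
/-- Lemma 1 (pointwise form): with `zⱼ = min tⱼ cⱼ`, `δⱼ = 1{tⱼ ≤ cⱼ}`,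
`t* = min t₁ t₂`, `c* = min c₁ c₂`, `δ* = 1{t* ≤ c*}`, and `η = 0, 1, 2`
according as `z₁ = z₂`, `z₁ > z₂`, `z₁ < z₂`, one has
`δ* = 1 ↔ (η = 1 ∧ δ₂ = 1) ∨ (η = 2 ∧ δ₁ = 1) ∨ (η = 0 ∧ (δ₁ = 1 ∨ δ₂ = 1))`. -/
theorem stmt0 (t₁ t₂ c₁ c₂ : ℝ) :
    min t₁ t₂ ≤ min c₁ c₂ ↔
      (min t₂ c₂ < min t₁ c₁ ∧ t₂ ≤ c₂) ∨
      (min t₁ c₁ < min t₂ c₂ ∧ t₁ ≤ c₁) ∨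
      (min t₁ c₁ = min t₂ c₂ ∧ (t₁ ≤ c₁ ∨ t₂ ≤ c₂)) := by
  have z1t := min_le_left t₁ c₁
  have z1c := min_le_right t₁ c₁
  have z2t := min_le_left t₂ c₂
  have z2c := min_le_right t₂ c₂
  constructor
  · intro h
    have hc1 := (h.trans (min_le_left c₁ c₂))
    have hc2 := (h.trans (min_le_right c₁ c₂))
    rcases lt_trichotomy (min t₁ c₁) (min t₂ c₂) with hlt | heq | hgt
    · refine Or.inr (Or.inl ⟨hlt, ?_⟩)
      by_contra hc
      push_neg at hc
      have h1 : min t₁ c₁ = c₁ := min_eq_right hc.le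
      have : c₁ < min t₁ t₂ := lt_min hc (by linarith)
      linarith
    · refine Or.inr (Or.inr ⟨heq, ?_⟩)
      by_contra hc
      push_neg at hc
      have h1 : min t₁ c₁ = c₁ := min_eq_right hc.1.le
      have h2 : min t₂ c₂ = c₂ := min_eq_right hc.2.le
      have : c₁ < min t₁ t₂ := lt_min hc.1 (by linarith)
      linarith
    · refine Or.inl ⟨hgt, ?_⟩
      by_contra hc
      push_neg at hc
      have h2 : min t₂ c₂ = c₂ := min_eq_right hc.le
      have : c₂ < min t₁ t₂ := lt_min (by linarith) hc
      linarith
  · rintro (⟨hlt, hd⟩ | ⟨hlt, hd⟩ | ⟨heq, hd | hd⟩)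
    · have h2 : min t₂ c₂ = t₂ := min_eq_left hd
      exact le_min (by linarith [min_le_right t₁ t₂]) (by linarith [min_le_right t₁ t₂])
    · have h1 : min t₁ c₁ = t₁ := min_eq_left hd
      exact le_min (by linarith [min_le_left t₁ t₂]) (by linarith [min_le_left t₁ t₂])
    · have h1 : min t₁ c₁ = t₁ := min_eq_left hd
      exact le_min (by linarith [min_le_left t₁ t₂]) (by linarith [min_le_left t₁ t₂])
    · have h2 : min t₂ c₂ = t₂ := min_eq_left hd
      exact le_min (by linarith [min_le_right t₁ t₂]) (by linarith [min_le_right t₁ t₂])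
end

section
/- Let (T₁,T₂) and (C₁,C₂) be random vectors in ℝ² on a probability space, with (T₁,T₂) independent of (C₁,C₂). Define Z_j = min(T_j,C_j), T* = min(T₁,T₂), C* = min(C₁,C₂), Z* = min(Z₁,Z₂), Δ* = 1{T* ≤ C*}, η = 0,1,2 according as Z₁ = Z₂, Z₁ > Z₂, Z₁ < Z₂, and ε = 0,1,2 according as T₁ = T₂, T₁ > T₂, T₁ < T₂. Fix a real t with P{Z* = t, Δ* = 1} > 0 and P{C₁ = t} = P{C₂ = t} = 0. Then P{T* = t} > 0, and for each j ∈ {0, 1, 2}: P{η = j | Z* = t, Δ* = 1} = P{ε = j | T* = t}. -/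
open MeasureTheory ProbabilityTheory

private lemma aux1 {t t₁ t₂ c₁ c₂ : ℝ} (h₁ : c₁ ≠ t) (h₂ : c₂ ≠ t) :
    (min (min t₁ c₁) (min t₂ c₂) = t ∧ min t₁ t₂ ≤ min c₁ c₂) ↔
      (min t₁ t₂ = t ∧ t < min c₁ c₂) := by
  have hre : min (min t₁ c₁) (min t₂ c₂) = min (min t₁ t₂) (min c₁ c₂) :=
    min_min_min_comm t₁ c₁ t₂ c₂
  have hC : min c₁ c₂ ≠ t := by
    rcases min_choice c₁ c₂ with h | h <;> rw [h] <;> assumption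
  constructor
  · rintro ⟨h1, h2⟩
    rw [hre, min_eq_left h2] at h1
    refine ⟨h1, lt_of_le_of_ne ?_ (Ne.symm hC)⟩
    rw [← h1]; exact h2
  · rintro ⟨h1, h2⟩
    have hle : min t₁ t₂ ≤ min c₁ c₂ := by rw [h1]; exact h2.le
    exact ⟨by rw [hre, min_eq_left hle, h1], hle⟩

private lemma aux2 {t t₁ t₂ c₁ c₂ : ℝ} (h1 : min t₁ t₂ = t) (h2 : t < min c₁ c₂) :
    (if min t₁ c₁ = min t₂ c₂ then (0 : ℕ) else if min t₂ c₂ < min t₁ c₁ then 1 else 2)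
      = if t₁ = t₂ then 0 else if t₂ < t₁ then 1 else 2 := by
  have hc₁ : t < c₁ := h2.trans_le (min_le_left _ _)
  have hc₂ : t < c₂ := h2.trans_le (min_le_right _ _)
  have ht₁ : t ≤ t₁ := by rw [← h1]; exact min_le_left _ _
  have ht₂ : t ≤ t₂ := by rw [← h1]; exact min_le_right _ _
  rcases ht₁.eq_or_lt with e₁ | l₁ <;> rcases ht₂.eq_or_lt with e₂ | l₂
  · rw [← e₁, ← e₂]
    simp [min_eq_left hc₁.le, min_eq_left hc₂.le]
  · have hz₁ : min t₁ c₁ = t := by rw [← e₁]; exact min_eq_left hc₁.le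
    have hz₂ : t < min t₂ c₂ := lt_min l₂ hc₂
    rw [hz₁, if_neg hz₂.ne, if_neg (not_lt.mpr hz₂.le),
      if_neg (show t₁ ≠ t₂ by rw [← e₁]; exact l₂.ne),
      if_neg (show ¬ t₂ < t₁ by rw [← e₁]; exact not_lt.mpr l₂.le)]
  · have hz₂ : min t₂ c₂ = t := by rw [← e₂]; exact min_eq_left hc₂.le
    have hz₁ : t < min t₁ c₁ := lt_min l₁ hc₁
    rw [hz₂, if_neg hz₁.ne', if_pos hz₁,
      if_neg (show t₁ ≠ t₂ by rw [← e₂]; exact l₁.ne'),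
      if_pos (show t₂ < t₁ by rw [← e₂]; exact l₁)]
  · exact absurd h1 (lt_min l₁ l₂).ne'

private lemma aux3 {t t₁ t₂ c₁ c₂ : ℝ} (h₁ : c₁ ≠ t) (h₂ : c₂ ≠ t) (j : ℕ) :
    ((if min t₁ c₁ = min t₂ c₂ then (0 : ℕ) else if min t₂ c₂ < min t₁ c₁ then 1 else 2) = j ∧
      min (min t₁ c₁) (min t₂ c₂) = t ∧ min t₁ t₂ ≤ min c₁ c₂) ↔
    (((if t₁ = t₂ then (0 : ℕ) else if t₂ < t₁ then 1 else 2) = j ∧ min t₁ t₂ = t) ∧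
      t < min c₁ c₂) := by
  constructor
  · rintro ⟨hj, hz⟩
    obtain ⟨ha, hb⟩ := (aux1 h₁ h₂).mp hz
    rw [aux2 ha hb] at hj
    exact ⟨⟨hj, ha⟩, hb⟩
  · rintro ⟨⟨hj, ha⟩, hb⟩
    rw [← aux2 ha hb] at hj
    exact ⟨hj, (aux1 h₁ h₂).mpr ⟨ha, hb⟩⟩

/-- Identification step (2): in the bivariate censoring model with
`(T₁,T₂)` independent of `(C₁,C₂)`, `Zⱼ = min Tⱼ Cⱼ`, `T* = min T₁ T₂`,
`C* = min C₁ C₂`, `Z* = min Z₁ Z₂`, `Δ* = 1{T* ≤ C*}`, `η` the order of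
`(Z₁,Z₂)` and `ε` the order of `(T₁,T₂)`: if `P{Z* = t, Δ* = 1} > 0` and
the censoring marginals have no atom at `t`, then `P{T* = t} > 0` and for
each `j ∈ {0,1,2}`, `P{η = j | Z* = t, Δ* = 1} = P{ε = j | T* = t}`. -/
theorem stmt5 {Ω : Type*} [MeasurableSpace Ω] (μ : Measure Ω) [IsProbabilityMeasure μ]
    (T₁ T₂ C₁ C₂ : Ω → ℝ)
    (hT₁ : Measurable T₁) (hT₂ : Measurable T₂)
    (hC₁ : Measurable C₁) (hC₂ : Measurable C₂)
    (hind : IndepFun (fun ω => (T₁ ω, T₂ ω)) (fun ω => (C₁ ω, C₂ ω)) μ)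
    (η ε : Ω → ℕ)
    (hη : ∀ ω, η ω =
      if min (T₁ ω) (C₁ ω) = min (T₂ ω) (C₂ ω) then 0
      else if min (T₂ ω) (C₂ ω) < min (T₁ ω) (C₁ ω) then 1 else 2)
    (hε : ∀ ω, ε ω = if T₁ ω = T₂ ω then 0 else if T₂ ω < T₁ ω then 1 else 2)
    (t : ℝ)
    (hpos : 0 < μ {ω | min (min (T₁ ω) (C₁ ω)) (min (T₂ ω) (C₂ ω)) = t ∧
        min (T₁ ω) (T₂ ω) ≤ min (C₁ ω) (C₂ ω)})
    (hC₁t : μ {ω | C₁ ω = t} = 0) (hC₂t : μ {ω | C₂ ω = t} = 0) :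
    0 < μ {ω | min (T₁ ω) (T₂ ω) = t} ∧
      ∀ j ∈ ({0, 1, 2} : Set ℕ),
        μ {ω | η ω = j ∧ min (min (T₁ ω) (C₁ ω)) (min (T₂ ω) (C₂ ω)) = t ∧
              min (T₁ ω) (T₂ ω) ≤ min (C₁ ω) (C₂ ω)} /
            μ {ω | min (min (T₁ ω) (C₁ ω)) (min (T₂ ω) (C₂ ω)) = t ∧
              min (T₁ ω) (T₂ ω) ≤ min (C₁ ω) (C₂ ω)}
          = μ {ω | ε ω = j ∧ min (T₁ ω) (T₂ ω) = t} /
              μ {ω | min (T₁ ω) (T₂ ω) = t} := by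
  set f : Ω → ℝ × ℝ := fun ω => (T₁ ω, T₂ ω) with hfdef
  set g : Ω → ℝ × ℝ := fun ω => (C₁ ω, C₂ ω) with hgdef
  set N : Set Ω := {ω | C₁ ω = t} ∪ {ω | C₂ ω = t} with hNdef
  have hN : μ N = 0 := measure_union_null hC₁t hC₂t
  have hSc : MeasurableSet {p : ℝ × ℝ | t < min p.1 p.2} :=
    measurableSet_lt measurable_const (measurable_fst.min measurable_snd)
  have hSt : MeasurableSet {p : ℝ × ℝ | min p.1 p.2 = t} :=
    (measurable_fst.min measurable_snd) (measurableSet_singleton t)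
  have hεm : Measurable
      (fun p : ℝ × ℝ => if p.1 = p.2 then (0 : ℕ) else if p.2 < p.1 then 1 else 2) :=
    Measurable.ite (measurableSet_eq_fun measurable_fst measurable_snd) measurable_const
      (Measurable.ite (measurableSet_lt measurable_snd measurable_fst) measurable_const
        measurable_const)
  have key : ∀ S : Set (ℝ × ℝ), MeasurableSet S →
      μ (f ⁻¹' S ∩ g ⁻¹' {p : ℝ × ℝ | t < min p.1 p.2})
        = μ (f ⁻¹' S) * μ (g ⁻¹' {p : ℝ × ℝ | t < min p.1 p.2}) :=
    fun S hS => hind.measure_inter_preimage_eq_mul S _ hS hSc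
  -- denominator identity
  have hA : μ {ω | min (min (T₁ ω) (C₁ ω)) (min (T₂ ω) (C₂ ω)) = t ∧
        min (T₁ ω) (T₂ ω) ≤ min (C₁ ω) (C₂ ω)}
      = μ {ω | min (T₁ ω) (T₂ ω) = t} * μ {ω | t < min (C₁ ω) (C₂ ω)} := by
    have hset : {ω | min (min (T₁ ω) (C₁ ω)) (min (T₂ ω) (C₂ ω)) = t ∧
          min (T₁ ω) (T₂ ω) ≤ min (C₁ ω) (C₂ ω)} \ N
        = (f ⁻¹' {p : ℝ × ℝ | min p.1 p.2 = t} ∩ g ⁻¹' {p : ℝ × ℝ | t < min p.1 p.2}) \ N := by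
      ext ω
      simp only [Set.mem_diff, hNdef, Set.mem_union, Set.mem_setOf_eq, not_or,
        Set.mem_inter_iff, Set.mem_preimage, hfdef, hgdef]
      exact and_congr_left fun hn => aux1 hn.1 hn.2
    calc μ {ω | min (min (T₁ ω) (C₁ ω)) (min (T₂ ω) (C₂ ω)) = t ∧
          min (T₁ ω) (T₂ ω) ≤ min (C₁ ω) (C₂ ω)}
        = μ ({ω | min (min (T₁ ω) (C₁ ω)) (min (T₂ ω) (C₂ ω)) = t ∧
          min (T₁ ω) (T₂ ω) ≤ min (C₁ ω) (C₂ ω)} \ N) := (measure_diff_null hN).symm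
      _ = μ ((f ⁻¹' {p : ℝ × ℝ | min p.1 p.2 = t}
            ∩ g ⁻¹' {p : ℝ × ℝ | t < min p.1 p.2}) \ N) := by rw [hset]
      _ = μ (f ⁻¹' {p : ℝ × ℝ | min p.1 p.2 = t}
            ∩ g ⁻¹' {p : ℝ × ℝ | t < min p.1 p.2}) := measure_diff_null hN
      _ = μ (f ⁻¹' {p : ℝ × ℝ | min p.1 p.2 = t})
            * μ (g ⁻¹' {p : ℝ × ℝ | t < min p.1 p.2}) := key _ hSt
      _ = μ {ω | min (T₁ ω) (T₂ ω) = t} * μ {ω | t < min (C₁ ω) (C₂ ω)} := rfl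
  -- numerator identity
  have hAj : ∀ j : ℕ,
      μ {ω | η ω = j ∧ min (min (T₁ ω) (C₁ ω)) (min (T₂ ω) (C₂ ω)) = t ∧
          min (T₁ ω) (T₂ ω) ≤ min (C₁ ω) (C₂ ω)}
        = μ {ω | ε ω = j ∧ min (T₁ ω) (T₂ ω) = t} * μ {ω | t < min (C₁ ω) (C₂ ω)} := by
    intro j
    have hSεj : MeasurableSet {p : ℝ × ℝ |
        (if p.1 = p.2 then (0 : ℕ) else if p.2 < p.1 then 1 else 2) = j ∧ min p.1 p.2 = t} :=
      (hεm (measurableSet_singleton j)).inter hSt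
    have hset : {ω | η ω = j ∧ min (min (T₁ ω) (C₁ ω)) (min (T₂ ω) (C₂ ω)) = t ∧
          min (T₁ ω) (T₂ ω) ≤ min (C₁ ω) (C₂ ω)} \ N
        = (f ⁻¹' {p : ℝ × ℝ |
            (if p.1 = p.2 then (0 : ℕ) else if p.2 < p.1 then 1 else 2) = j ∧ min p.1 p.2 = t}
          ∩ g ⁻¹' {p : ℝ × ℝ | t < min p.1 p.2}) \ N := by
      ext ω
      simp only [Set.mem_diff, hNdef, Set.mem_union, Set.mem_setOf_eq, not_or,
        Set.mem_inter_iff, Set.mem_preimage, hfdef, hgdef, hη ω]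
      exact and_congr_left fun hn => aux3 hn.1 hn.2 j
    have hEj : {ω | ε ω = j ∧ min (T₁ ω) (T₂ ω) = t}
        = f ⁻¹' {p : ℝ × ℝ |
            (if p.1 = p.2 then (0 : ℕ) else if p.2 < p.1 then 1 else 2) = j ∧ min p.1 p.2 = t} := by
      ext ω
      simp only [Set.mem_setOf_eq, Set.mem_preimage, hfdef, hε ω]
    calc μ {ω | η ω = j ∧ min (min (T₁ ω) (C₁ ω)) (min (T₂ ω) (C₂ ω)) = t ∧
          min (T₁ ω) (T₂ ω) ≤ min (C₁ ω) (C₂ ω)}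
        = μ ({ω | η ω = j ∧ min (min (T₁ ω) (C₁ ω)) (min (T₂ ω) (C₂ ω)) = t ∧
          min (T₁ ω) (T₂ ω) ≤ min (C₁ ω) (C₂ ω)} \ N) := (measure_diff_null hN).symm
      _ = μ ((f ⁻¹' {p : ℝ × ℝ |
            (if p.1 = p.2 then (0 : ℕ) else if p.2 < p.1 then 1 else 2) = j ∧ min p.1 p.2 = t}
          ∩ g ⁻¹' {p : ℝ × ℝ | t < min p.1 p.2}) \ N) := by rw [hset]
      _ = μ (f ⁻¹' {p : ℝ × ℝ |
            (if p.1 = p.2 then (0 : ℕ) else if p.2 < p.1 then 1 else 2) = j ∧ min p.1 p.2 = t}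
          ∩ g ⁻¹' {p : ℝ × ℝ | t < min p.1 p.2}) := measure_diff_null hN
      _ = μ (f ⁻¹' {p : ℝ × ℝ |
            (if p.1 = p.2 then (0 : ℕ) else if p.2 < p.1 then 1 else 2) = j ∧ min p.1 p.2 = t})
          * μ (g ⁻¹' {p : ℝ × ℝ | t < min p.1 p.2}) := key _ hSεj
      _ = μ {ω | ε ω = j ∧ min (T₁ ω) (T₂ ω) = t} * μ {ω | t < min (C₁ ω) (C₂ ω)} := by
          rw [hEj]; rfl
  rw [hA] at hpos
  have ha : μ {ω | min (T₁ ω) (T₂ ω) = t} ≠ 0 := by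
    intro h; rw [h, zero_mul] at hpos; exact lt_irrefl _ hpos
  have hc : μ {ω | t < min (C₁ ω) (C₂ ω)} ≠ 0 := by
    intro h; rw [h, mul_zero] at hpos; exact lt_irrefl _ hpos
  have hctop : μ {ω | t < min (C₁ ω) (C₂ ω)} ≠ ⊤ := measure_ne_top μ _
  refine ⟨pos_iff_ne_zero.mpr ha, fun j _ => ?_⟩
  rw [hA, hAj j, ENNReal.mul_div_mul_right _ _ hc hctop]
end

section
/- For any real numbers t₁, t₂, c₁, c₂ and reals j < t, with Z_i = min(t_i, c_i), Δ_i = 1{t_i ≤ c_i}, t* = min(t₁,t₂), c* = min(c₁,c₂), Z* = min(Z₁,Z₂), δ* = 1{t* ≤ c*}, and η = 1 meaning Z₁ > Z₂: the event (Z₁ = t, Δ₁ = 1, Z* = j, δ* = 1, η = 1) holds if and only if (t₁ = t, t₂ = j, c₁ ≥ t, c₂ ≥ j). -/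
/-- Event-level identity (identification step (3)): with `Zᵢ = min tᵢ cᵢ`,
`Δᵢ = 1{tᵢ ≤ cᵢ}`, `t* = min t₁ t₂`, `c* = min c₁ c₂`, `Z* = min Z₁ Z₂`,
`δ* = 1{t* ≤ c*}`, and `η = 1` meaning `Z₁ > Z₂`: for `j < t`, the event
`(Z₁ = t, Δ₁ = 1, Z* = j, δ* = 1, η = 1)` holds iff
`(t₁ = t, t₂ = j, c₁ ≥ t, c₂ ≥ j)`. -/
theorem stmt6 (t₁ t₂ c₁ c₂ j t : ℝ) (hjt : j < t) :
    (min t₁ c₁ = t ∧ t₁ ≤ c₁ ∧ min (min t₁ c₁) (min t₂ c₂) = j ∧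
        min t₁ t₂ ≤ min c₁ c₂ ∧ min t₂ c₂ < min t₁ c₁) ↔
      (t₁ = t ∧ t₂ = j ∧ t ≤ c₁ ∧ j ≤ c₂) := by
  constructor
  · rintro ⟨hZ1, hd1, hZs, hds, he⟩
    have ht1 : t₁ = t := by rw [min_eq_left hd1] at hZ1; exact hZ1
    have hZ2 : min t₂ c₂ = j := by
      rw [min_eq_right he.le] at hZs; exact hZs
    have hc1 : t ≤ c₁ := ht1 ▸ hd1
    have ht2 : t₂ = j := by
      rcases min_cases t₂ c₂ with ⟨h, _⟩ | ⟨h, hc⟩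
      · rw [h] at hZ2; exact hZ2
      · exfalso
        have hc2j : c₂ = j := by rw [h] at hZ2; exact hZ2
        have : min t₁ t₂ ≤ j := le_trans hds (le_trans (min_le_right _ _) hc2j.le)
        rcases min_cases t₁ t₂ with ⟨hm, _⟩ | ⟨hm, hle⟩
        · rw [hm, ht1] at this; linarith
        · rw [hm] at this; linarith [hc2j ▸ hc]
    exact ⟨ht1, ht2, hc1, by rw [← hZ2]; exact min_le_right _ _⟩
  · rintro ⟨ht1, ht2, hc1, hc2⟩
    subst ht1 ht2
    have h1 : min t₁ c₁ = t₁ := min_eq_left hc1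
    have h2 : min t₂ c₂ = t₂ := min_eq_left hc2
    refine ⟨h1, hc1, ?_, ?_, ?_⟩
    · rw [h1, h2, min_eq_right hjt.le]
    · exact le_min (le_trans (min_le_left _ _) hc1) (le_trans (min_le_right _ _) hc2)
    · rw [h1, h2]; exact hjt
end

section
/- Let (T₁,T₂) and (C₁,C₂) be random vectors in ℝ² with (T₁,T₂) independent of (C₁,C₂). Define Z_i = min(T_i,C_i), Δ_i = 1{T_i ≤ C_i}, T* = min(T₁,T₂), C* = min(C₁,C₂), Z* = min(Z₁,Z₂), Δ* = 1{T* ≤ C*}, and η = 1 meaning Z₁ > Z₂. Fix reals j < t with P{T₁ ≥ t, T₂ = j} > 0 and P{Z₁ ≥ t, Z* = j, Δ* = 1, η = 1} > 0. Then P{T₁ = t, T₂ = j} / P{T₁ ≥ t, T₂ = j} = P{Z₁ = t, Δ₁ = 1, Z* = j, Δ* = 1, η = 1} / P{Z₁ ≥ t, Z* = j, Δ* = 1, η = 1}. -/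
/-!
Once `Z₁ > j`, the observed event `{Z* = j, Δ* = 1, η = 1}` is exactly `{T₂ = j, C₂ ≥ j}`:
if instead `C₂ = j < T₂`, then `T* > j ≥ C*` and `Δ* = 0`. Hence both events on the right are
a `(T₁,T₂)`-event intersected with the same `(C₁,C₂)`-event `{C₁ ≥ t, C₂ ≥ j}`, and by independence
its probability cancels from the ratio.
-/

open MeasureTheory ProbabilityTheory

section LinearOrder

variable {α : Type*} [LinearOrder α] {T₁ T₂ C₁ C₂ j t : α}

lemma observed_second_failure_iff (hj : j < min T₁ C₁) :
    (min (min T₁ C₁) (min T₂ C₂) = j ∧ min T₁ T₂ ≤ min C₁ C₂ ∧ min T₂ C₂ < min T₁ C₁)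
      ↔ T₂ = j ∧ j ≤ C₂ := by
  simp only [lt_min_iff] at hj
  constructor
  · rintro ⟨hZ, hΔ, hη⟩
    rw [min_eq_right hη.le] at hZ
    rcases le_or_gt T₂ C₂ with hTC | hCT
    · rw [min_eq_left hTC] at hZ
      exact ⟨hZ, hZ ▸ hTC⟩
    · rw [min_eq_right hCT.le] at hZ
      exact absurd (hZ ▸ min_le_right C₁ C₂) ((lt_min hj.1 (hZ ▸ hCT)).trans_le hΔ).not_ge
  · rintro ⟨rfl, hC₂⟩
    have hZ₂ : min T₂ C₂ = T₂ := min_eq_left hC₂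
    refine ⟨?_, ?_, ?_⟩
    · rw [hZ₂]; exact min_eq_right (le_min hj.1.le hj.2.le)
    · exact (min_le_right _ _).trans (le_min hj.2.le hC₂)
    · rw [hZ₂]; exact lt_min hj.1 hj.2

lemma observed_hazard_numerator_iff (hjt : j < t) :
    (min T₁ C₁ = t ∧ T₁ ≤ C₁ ∧ min (min T₁ C₁) (min T₂ C₂) = j ∧
      min T₁ T₂ ≤ min C₁ C₂ ∧ min T₂ C₂ < min T₁ C₁)
      ↔ (T₁ = t ∧ T₂ = j) ∧ (t ≤ C₁ ∧ j ≤ C₂) := by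
  constructor
  · rintro ⟨hZ₁, hΔ₁, hrest⟩
    have hT₁ : T₁ = t := (min_eq_left hΔ₁).symm.trans hZ₁
    obtain ⟨hT₂, hC₂⟩ := (observed_second_failure_iff (hjt.trans_eq hZ₁.symm)).1 hrest
    exact ⟨⟨hT₁, hT₂⟩, hT₁ ▸ hΔ₁, hC₂⟩
  · rintro ⟨⟨rfl, hT₂⟩, hC₁, hC₂⟩
    have hZ₁ : min T₁ C₁ = T₁ := min_eq_left hC₁
    exact ⟨hZ₁, hC₁, (observed_second_failure_iff (hjt.trans_eq hZ₁.symm)).2 ⟨hT₂, hC₂⟩⟩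

lemma observed_hazard_denominator_iff (hjt : j < t) :
    (t ≤ min T₁ C₁ ∧ min (min T₁ C₁) (min T₂ C₂) = j ∧
      min T₁ T₂ ≤ min C₁ C₂ ∧ min T₂ C₂ < min T₁ C₁)
      ↔ (t ≤ T₁ ∧ T₂ = j) ∧ (t ≤ C₁ ∧ j ≤ C₂) := by
  constructor
  · rintro ⟨hZ₁, hrest⟩
    obtain ⟨hT₂, hC₂⟩ := (observed_second_failure_iff (hjt.trans_le hZ₁)).1 hrest
    exact ⟨⟨(le_min_iff.1 hZ₁).1, hT₂⟩, (le_min_iff.1 hZ₁).2, hC₂⟩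
  · rintro ⟨⟨hT₁, hT₂⟩, hC₁, hC₂⟩
    have hZ₁ : t ≤ min T₁ C₁ := le_min hT₁ hC₁
    exact ⟨hZ₁, (observed_second_failure_iff (hjt.trans_le hZ₁)).2 ⟨hT₂, hC₂⟩⟩

end LinearOrder

lemma ProbabilityTheory.IndepFun.measure_inter_preimage_div_eq {Ω α β : Type*}
    {_ : MeasurableSpace Ω} [MeasurableSpace α] [MeasurableSpace β]
    {μ : Measure Ω} [IsFiniteMeasure μ]
    {f : Ω → α} {g : Ω → β} (hfg : IndepFun f g μ) {A B : Set α} {E : Set β}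
    (hA : MeasurableSet A) (hB : MeasurableSet B) (hE : MeasurableSet E)
    (hBE : μ (f ⁻¹' B ∩ g ⁻¹' E) ≠ 0) :
    μ (f ⁻¹' A ∩ g ⁻¹' E) / μ (f ⁻¹' B ∩ g ⁻¹' E) = μ (f ⁻¹' A) / μ (f ⁻¹' B) := by
  rw [hfg.measure_inter_preimage_eq_mul _ _ hB hE] at hBE ⊢
  rw [hfg.measure_inter_preimage_eq_mul _ _ hA hE,
    ENNReal.mul_div_mul_right _ _ (right_ne_zero_of_mul hBE) (measure_ne_top μ _)]

theorem stmt8_general {Ω : Type*} [MeasurableSpace Ω] (μ : Measure Ω) [IsProbabilityMeasure μ]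
    (T₁ T₂ C₁ C₂ : Ω → ℝ)
    (hind : IndepFun (fun ω => (T₁ ω, T₂ ω)) (fun ω => (C₁ ω, C₂ ω)) μ)
    (j t : ℝ) (hjt : j < t)
    (hZ : 0 < μ {ω | t ≤ min (T₁ ω) (C₁ ω) ∧
        min (min (T₁ ω) (C₁ ω)) (min (T₂ ω) (C₂ ω)) = j ∧
        min (T₁ ω) (T₂ ω) ≤ min (C₁ ω) (C₂ ω) ∧
        min (T₂ ω) (C₂ ω) < min (T₁ ω) (C₁ ω)}) :
    μ {ω | T₁ ω = t ∧ T₂ ω = j} / μ {ω | t ≤ T₁ ω ∧ T₂ ω = j}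
      = μ {ω | min (T₁ ω) (C₁ ω) = t ∧ T₁ ω ≤ C₁ ω ∧
            min (min (T₁ ω) (C₁ ω)) (min (T₂ ω) (C₂ ω)) = j ∧
            min (T₁ ω) (T₂ ω) ≤ min (C₁ ω) (C₂ ω) ∧
            min (T₂ ω) (C₂ ω) < min (T₁ ω) (C₁ ω)} /
          μ {ω | t ≤ min (T₁ ω) (C₁ ω) ∧
            min (min (T₁ ω) (C₁ ω)) (min (T₂ ω) (C₂ ω)) = j ∧
            min (T₁ ω) (T₂ ω) ≤ min (C₁ ω) (C₂ ω) ∧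
            min (T₂ ω) (C₂ ω) < min (T₁ ω) (C₁ ω)} := by
  set E : Set (ℝ × ℝ) := Set.Ici t ×ˢ Set.Ici j
  have hnum : {ω | min (T₁ ω) (C₁ ω) = t ∧ T₁ ω ≤ C₁ ω ∧
      min (min (T₁ ω) (C₁ ω)) (min (T₂ ω) (C₂ ω)) = j ∧
      min (T₁ ω) (T₂ ω) ≤ min (C₁ ω) (C₂ ω) ∧ min (T₂ ω) (C₂ ω) < min (T₁ ω) (C₁ ω)}
      = (fun ω => (T₁ ω, T₂ ω)) ⁻¹' ({t} ×ˢ {j}) ∩ (fun ω => (C₁ ω, C₂ ω)) ⁻¹' E :=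
    Set.ext fun _ => observed_hazard_numerator_iff hjt
  have hden : {ω | t ≤ min (T₁ ω) (C₁ ω) ∧
      min (min (T₁ ω) (C₁ ω)) (min (T₂ ω) (C₂ ω)) = j ∧
      min (T₁ ω) (T₂ ω) ≤ min (C₁ ω) (C₂ ω) ∧ min (T₂ ω) (C₂ ω) < min (T₁ ω) (C₁ ω)}
      = (fun ω => (T₁ ω, T₂ ω)) ⁻¹' (Set.Ici t ×ˢ {j}) ∩ (fun ω => (C₁ ω, C₂ ω)) ⁻¹' E :=
    Set.ext fun _ => observed_hazard_denominator_iff hjt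
  rw [hden] at hZ
  rw [hnum, hden, hind.measure_inter_preimage_div_eq
    ((measurableSet_singleton t).prod (measurableSet_singleton j))
    (measurableSet_Ici.prod (measurableSet_singleton j))
    (measurableSet_Ici.prod measurableSet_Ici) hZ.ne']
  rfl

/-- Identification step (3): in the bivariate censoring model with
`(T₁,T₂)` independent of `(C₁,C₂)`, `Zᵢ = min Tᵢ Cᵢ`, `Δᵢ = 1{Tᵢ ≤ Cᵢ}`,
`T* = min T₁ T₂`, `C* = min C₁ C₂`, `Z* = min Z₁ Z₂`, `Δ* = 1{T* ≤ C*}`,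
and `η = 1` meaning `Z₁ > Z₂`: for `j < t` with
`P{T₁ ≥ t, T₂ = j} > 0` and `P{Z₁ ≥ t, Z* = j, Δ* = 1, η = 1} > 0`,
`P{T₁ = t, T₂ = j}/P{T₁ ≥ t, T₂ = j}
  = P{Z₁ = t, Δ₁ = 1, Z* = j, Δ* = 1, η = 1}/P{Z₁ ≥ t, Z* = j, Δ* = 1, η = 1}`. -/
theorem stmt8 {Ω : Type*} [MeasurableSpace Ω] (μ : Measure Ω) [IsProbabilityMeasure μ]
    (T₁ T₂ C₁ C₂ : Ω → ℝ)
    (hT₁ : Measurable T₁) (hT₂ : Measurable T₂)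
    (hC₁ : Measurable C₁) (hC₂ : Measurable C₂)
    (hind : IndepFun (fun ω => (T₁ ω, T₂ ω)) (fun ω => (C₁ ω, C₂ ω)) μ)
    (j t : ℝ) (hjt : j < t)
    (hT : 0 < μ {ω | t ≤ T₁ ω ∧ T₂ ω = j})
    (hZ : 0 < μ {ω | t ≤ min (T₁ ω) (C₁ ω) ∧
        min (min (T₁ ω) (C₁ ω)) (min (T₂ ω) (C₂ ω)) = j ∧
        min (T₁ ω) (T₂ ω) ≤ min (C₁ ω) (C₂ ω) ∧
        min (T₂ ω) (C₂ ω) < min (T₁ ω) (C₁ ω)}) :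
    μ {ω | T₁ ω = t ∧ T₂ ω = j} / μ {ω | t ≤ T₁ ω ∧ T₂ ω = j}
      = μ {ω | min (T₁ ω) (C₁ ω) = t ∧ T₁ ω ≤ C₁ ω ∧
            min (min (T₁ ω) (C₁ ω)) (min (T₂ ω) (C₂ ω)) = j ∧
            min (T₁ ω) (T₂ ω) ≤ min (C₁ ω) (C₂ ω) ∧
            min (T₂ ω) (C₂ ω) < min (T₁ ω) (C₁ ω)} /
          μ {ω | t ≤ min (T₁ ω) (C₁ ω) ∧
            min (min (T₁ ω) (C₁ ω)) (min (T₂ ω) (C₂ ω)) = j ∧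
            min (T₁ ω) (T₂ ω) ≤ min (C₁ ω) (C₂ ω) ∧
            min (T₂ ω) (C₂ ω) < min (T₁ ω) (C₁ ω)} :=
  stmt8_general μ T₁ T₂ C₁ C₂ hind j t hjt hZ
end

section
/- Let (T₁,T₂) and (C₁,C₂) be random vectors in ℝ² with (T₁,T₂) independent of (C₁,C₂). Define Z_i = min(T_i,C_i), Δ_i = 1{T_i ≤ C_i}, T* = min(T₁,T₂), C* = min(C₁,C₂), Z* = min(Z₁,Z₂), Δ* = 1{T* ≤ C*}, and η = 2 meaning Z₁ < Z₂. Fix reals j < t with P{T₂ ≥ t, T₁ = j} > 0 and P{Z₂ ≥ t, Z* = j, Δ* = 1, η = 2} > 0. Then P{T₂ = t, T₁ = j} / P{T₂ ≥ t, T₁ = j} = P{Z₂ = t, Δ₂ = 1, Z* = j, Δ* = 1, η = 2} / P{Z₂ ≥ t, Z* = j, Δ* = 1, η = 2}. -/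
/-!
On the event `{Z* = j, Δ* = 1, η = 2}` component 1 fails first and is observed, which forces
`T₁ = j ≤ C₁` and `T₂, C₂ > j`. Hence for `t > j` the events `{Z₂ ≥ t, …}` and
`{Z₂ = t, Δ₂ = 1, …}` are events in `(T₁, T₂)` intersected with the common censoring event
`{C₁ ≥ j, C₂ ≥ t}`. By independence the probability of that censoring event is a common factor
of numerator and denominator, and it is nonzero because it dominates the denominator.
-/

open MeasureTheory ProbabilityTheory

section Observed

variable {α : Type*} [LinearOrder α] {a b c d j t : α}

theorem observed_first_failure_iff :
    (min (min a c) (min b d) = j ∧ min a b ≤ min c d ∧ min a c < min b d) ↔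
      a = j ∧ j ≤ c ∧ j < min b d := by
  constructor
  · rintro ⟨hmin, hcens, hfirst⟩
    have hac : min a c = j := by rwa [min_eq_left hfirst.le] at hmin
    rcases le_or_gt a c with hle | hlt
    · rw [min_eq_left hle] at hac hfirst
      exact ⟨hac, hac ▸ hle, hac ▸ hfirst⟩
    · -- if component 1 were censored first, `min c d ≤ c < min a b` would contradict `Δ* = 1`
      rw [min_eq_right hlt.le] at hfirst
      have hab : c < min a b := lt_min hlt (hfirst.trans_le (min_le_left _ _))
      exact absurd (hcens.trans (min_le_left _ _)) hab.not_ge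
  · rintro ⟨rfl, hac, hbd⟩
    refine ⟨by rw [min_eq_left hac, min_eq_left hbd.le], ?_, by rwa [min_eq_left hac]⟩
    exact le_min ((min_le_left _ _).trans hac)
      ((min_le_left _ _).trans (hbd.le.trans (min_le_right _ _)))

theorem observed_at_risk_iff (hjt : j < t) :
    (t ≤ min b d ∧ min (min a c) (min b d) = j ∧ min a b ≤ min c d ∧ min a c < min b d) ↔
      (t ≤ b ∧ a = j) ∧ (j ≤ c ∧ t ≤ d) := by
  rw [observed_first_failure_iff, le_min_iff]
  constructor
  · rintro ⟨⟨hb, hd⟩, ha, hc, -⟩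
    exact ⟨⟨hb, ha⟩, hc, hd⟩
  · rintro ⟨⟨hb, ha⟩, hc, hd⟩
    exact ⟨⟨hb, hd⟩, ha, hc, lt_min (hjt.trans_le hb) (hjt.trans_le hd)⟩

theorem observed_failure_at_iff (hjt : j < t) :
    (min b d = t ∧ b ≤ d ∧ min (min a c) (min b d) = j ∧ min a b ≤ min c d ∧
        min a c < min b d) ↔
      (b = t ∧ a = j) ∧ (j ≤ c ∧ t ≤ d) := by
  constructor
  · rintro ⟨hbd, hle, hobs⟩
    obtain ⟨⟨-, ha⟩, hc, hd⟩ := (observed_at_risk_iff hjt).mp ⟨hbd.ge, hobs⟩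
    exact ⟨⟨(min_eq_left hle).symm.trans hbd, ha⟩, hc, hd⟩
  · rintro ⟨⟨rfl, ha⟩, hc, hd⟩
    exact ⟨min_eq_left hd, hd, ((observed_at_risk_iff hjt).mpr ⟨⟨le_rfl, ha⟩, hc, hd⟩).2⟩

end Observed

theorem ProbabilityTheory.IndepFun.measure_preimage_div_eq_inter_div {Ω β γ : Type*}
    [MeasurableSpace Ω] [MeasurableSpace β] [MeasurableSpace γ] {μ : Measure Ω} [IsFiniteMeasure μ]
    {X : Ω → β} {Y : Ω → γ} (hXY : IndepFun X Y μ) {A B : Set β} {U : Set γ}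
    (hA : MeasurableSet A) (hB : MeasurableSet B) (hU : MeasurableSet U)
    (hU₀ : μ (Y ⁻¹' U) ≠ 0) :
    μ (X ⁻¹' A) / μ (X ⁻¹' B) = μ (X ⁻¹' A ∩ Y ⁻¹' U) / μ (X ⁻¹' B ∩ Y ⁻¹' U) := by
  rw [hXY.measure_inter_preimage_eq_mul _ _ hA hU, hXY.measure_inter_preimage_eq_mul _ _ hB hU,
    ENNReal.mul_div_mul_right _ _ hU₀ (measure_ne_top μ _)]

theorem stmt9_general {Ω : Type*} [MeasurableSpace Ω] (μ : Measure Ω) [IsProbabilityMeasure μ]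
    (T₁ T₂ C₁ C₂ : Ω → ℝ)
    (hind : IndepFun (fun ω => (T₁ ω, T₂ ω)) (fun ω => (C₁ ω, C₂ ω)) μ)
    (j t : ℝ) (hjt : j < t)
    (hZ : 0 < μ {ω | t ≤ min (T₂ ω) (C₂ ω) ∧
        min (min (T₁ ω) (C₁ ω)) (min (T₂ ω) (C₂ ω)) = j ∧
        min (T₁ ω) (T₂ ω) ≤ min (C₁ ω) (C₂ ω) ∧
        min (T₁ ω) (C₁ ω) < min (T₂ ω) (C₂ ω)}) :
    μ {ω | T₂ ω = t ∧ T₁ ω = j} / μ {ω | t ≤ T₂ ω ∧ T₁ ω = j}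
      = μ {ω | min (T₂ ω) (C₂ ω) = t ∧ T₂ ω ≤ C₂ ω ∧
            min (min (T₁ ω) (C₁ ω)) (min (T₂ ω) (C₂ ω)) = j ∧
            min (T₁ ω) (T₂ ω) ≤ min (C₁ ω) (C₂ ω) ∧
            min (T₁ ω) (C₁ ω) < min (T₂ ω) (C₂ ω)} /
          μ {ω | t ≤ min (T₂ ω) (C₂ ω) ∧
            min (min (T₁ ω) (C₁ ω)) (min (T₂ ω) (C₂ ω)) = j ∧
            min (T₁ ω) (T₂ ω) ≤ min (C₁ ω) (C₂ ω) ∧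
            min (T₁ ω) (C₁ ω) < min (T₂ ω) (C₂ ω)} := by
  have hfail : MeasurableSet {p : ℝ × ℝ | p.2 = t ∧ p.1 = j} :=
    (measurable_snd (measurableSet_singleton t)).inter (measurable_fst (measurableSet_singleton j))
  have hrisk : MeasurableSet {p : ℝ × ℝ | t ≤ p.2 ∧ p.1 = j} :=
    (measurable_snd measurableSet_Ici).inter (measurable_fst (measurableSet_singleton j))
  have hcens : MeasurableSet {q : ℝ × ℝ | j ≤ q.1 ∧ t ≤ q.2} :=
    (measurable_fst measurableSet_Ici).inter (measurable_snd measurableSet_Ici)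
  have hcens₀ : μ ((fun ω => (C₁ ω, C₂ ω)) ⁻¹' {q | j ≤ q.1 ∧ t ≤ q.2}) ≠ 0 :=
    (hZ.trans_le (measure_mono fun ω hω => ((observed_at_risk_iff hjt).mp hω).2)).ne'
  refine (hind.measure_preimage_div_eq_inter_div hfail hrisk hcens hcens₀).trans ?_
  congr 2 <;> ext ω
  · exact (observed_failure_at_iff hjt).symm
  · exact (observed_at_risk_iff hjt).symm

/-- Identification step (4) (symmetric counterpart of step (3)): in the
bivariate censoring model with `(T₁,T₂)` independent of `(C₁,C₂)`,
`Zᵢ = min Tᵢ Cᵢ`, `Δᵢ = 1{Tᵢ ≤ Cᵢ}`, `T* = min T₁ T₂`, `C* = min C₁ C₂`,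
`Z* = min Z₁ Z₂`, `Δ* = 1{T* ≤ C*}`, and `η = 2` meaning `Z₁ < Z₂`:
for `j < t` with `P{T₂ ≥ t, T₁ = j} > 0` and
`P{Z₂ ≥ t, Z* = j, Δ* = 1, η = 2} > 0`,
`P{T₂ = t, T₁ = j}/P{T₂ ≥ t, T₁ = j}
  = P{Z₂ = t, Δ₂ = 1, Z* = j, Δ* = 1, η = 2}/P{Z₂ ≥ t, Z* = j, Δ* = 1, η = 2}`. -/
theorem stmt9 {Ω : Type*} [MeasurableSpace Ω] (μ : Measure Ω) [IsProbabilityMeasure μ]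
    (T₁ T₂ C₁ C₂ : Ω → ℝ)
    (hT₁ : Measurable T₁) (hT₂ : Measurable T₂)
    (hC₁ : Measurable C₁) (hC₂ : Measurable C₂)
    (hind : IndepFun (fun ω => (T₁ ω, T₂ ω)) (fun ω => (C₁ ω, C₂ ω)) μ)
    (j t : ℝ) (hjt : j < t)
    (hT : 0 < μ {ω | t ≤ T₂ ω ∧ T₁ ω = j})
    (hZ : 0 < μ {ω | t ≤ min (T₂ ω) (C₂ ω) ∧
        min (min (T₁ ω) (C₁ ω)) (min (T₂ ω) (C₂ ω)) = j ∧
        min (T₁ ω) (T₂ ω) ≤ min (C₁ ω) (C₂ ω) ∧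
        min (T₁ ω) (C₁ ω) < min (T₂ ω) (C₂ ω)}) :
    μ {ω | T₂ ω = t ∧ T₁ ω = j} / μ {ω | t ≤ T₂ ω ∧ T₁ ω = j}
      = μ {ω | min (T₂ ω) (C₂ ω) = t ∧ T₂ ω ≤ C₂ ω ∧
            min (min (T₁ ω) (C₁ ω)) (min (T₂ ω) (C₂ ω)) = j ∧
            min (T₁ ω) (T₂ ω) ≤ min (C₁ ω) (C₂ ω) ∧
            min (T₁ ω) (C₁ ω) < min (T₂ ω) (C₂ ω)} /
          μ {ω | t ≤ min (T₂ ω) (C₂ ω) ∧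
            min (min (T₁ ω) (C₁ ω)) (min (T₂ ω) (C₂ ω)) = j ∧
            min (T₁ ω) (T₂ ω) ≤ min (C₁ ω) (C₂ ω) ∧
            min (T₁ ω) (C₁ ω) < min (T₂ ω) (C₂ ω)} :=
  stmt9_general μ T₁ T₂ C₁ C₂ hind j t hjt hZ
end

section
/- Let (T₁,T₂) be a random vector taking values in {1,2,3,...} × {1,2,3,...}, and set T* = min(T₁,T₂) and ε = 1 meaning T₁ > T₂. Fix integers i ≥ 1 and d ≥ 1, and assume P{T* ≥ j} > 0 for all 1 ≤ j ≤ i, P{ε = 1, T* = i} > 0, and P{T₁ ≥ i + d', T* = i, ε = 1} > 0 for all 1 ≤ d' ≤ d. Then P{T₁ = i + d, T₂ = i} = (∏_{j=1}^{i-1} P{T* > j}/P{T* ≥ j}) · (P{T* = i}/P{T* ≥ i}) · P{ε = 1 | T* = i} · (∏_{d'=1}^{d-1} P{T₁ > i + d' | T* = i, ε = 1} / P{T₁ ≥ i + d' | T* = i, ε = 1}) · (P{T₁ = i + d | T* = i, ε = 1} / P{T₁ ≥ i + d | T* = i, ε = 1}). -/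
/-!
Writing `S j = P{T* ≥ j}` and `R k = P{T₁ ≥ i + k, T* = i, ε = 1}`, both hazard products
telescope: `∏_{j<i} S (j+1) / S j = S i / S 1 = S i` and `∏_{k<d} R (k+1) / R k = R d / R 1`.
What remains is the chain `S i ⬝ (P{T* = i} / S i) ⬝ (R 1 / P{T* = i}) ⬝ (R d / R 1) ⬝ (P{…} / R d)`,
in which every denominator cancels, since `R 1 = P{ε = 1, T* = i}` and
`{T₁ = i + d, T₂ = i} = {T₁ = i + d, T* = i, ε = 1}`. All the denominators are probabilities
of events containing `{T₁ ≥ i + d, T* = i, ε = 1}`, so they are nonzero.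
-/

open MeasureTheory ENNReal

theorem ENNReal.mul_prod_Ico_div {f : ℕ → ℝ≥0∞} {m n : ℕ} (hmn : m ≤ n)
    (h0 : ∀ j ∈ Finset.Ico m n, f j ≠ 0) (htop : ∀ j ∈ Finset.Ico m n, f j ≠ ∞) :
    f m * ∏ j ∈ Finset.Ico m n, f (j + 1) / f j = f n := by
  induction n, hmn using Nat.le_induction with
  | base => simp
  | succ n hmn ih =>
    have hsub : Finset.Ico m n ⊆ Finset.Ico m (n + 1) := Finset.Ico_subset_Ico_right n.le_succ
    have hn : n ∈ Finset.Ico m (n + 1) := Finset.mem_Ico.2 ⟨hmn, n.lt_succ_self⟩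
    rw [Finset.prod_Ico_succ_top hmn, ← mul_assoc,
      ih (fun j hj => h0 j (hsub hj)) (fun j hj => htop j (hsub hj)),
      ENNReal.mul_div_cancel (h0 n hn) (htop n hn)]

theorem MeasureTheory.measure_mul_prod_Ico_div {Ω : Type*} [MeasurableSpace Ω] (μ : Measure Ω)
    [IsFiniteMeasure μ] (S : ℕ → Set Ω) {m n : ℕ} (hmn : m ≤ n)
    (h0 : ∀ j ∈ Finset.Ico m n, μ (S j) ≠ 0) :
    μ (S m) * ∏ j ∈ Finset.Ico m n, μ (S (j + 1)) / μ (S j) = μ (S n) :=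
  ENNReal.mul_prod_Ico_div (f := fun j => μ (S j)) hmn h0 fun _ _ => measure_ne_top μ _

theorem stmt12_general {Ω : Type*} [MeasurableSpace Ω] (μ : Measure Ω) [IsProbabilityMeasure μ]
    (T₁ T₂ : Ω → ℕ) (hT₁1 : ∀ ω, 1 ≤ T₁ ω) (hT₂1 : ∀ ω, 1 ≤ T₂ ω)
    (i d : ℕ) (hi : 1 ≤ i) (hd : 1 ≤ d)
    (hcond : ∀ d', 1 ≤ d' → d' ≤ d →
      0 < μ {ω | i + d' ≤ T₁ ω ∧ min (T₁ ω) (T₂ ω) = i ∧ T₂ ω < T₁ ω}) :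
    μ {ω | T₁ ω = i + d ∧ T₂ ω = i}
      = (∏ j ∈ Finset.Icc 1 (i - 1),
            μ {ω | j < min (T₁ ω) (T₂ ω)} / μ {ω | j ≤ min (T₁ ω) (T₂ ω)})
        * (μ {ω | min (T₁ ω) (T₂ ω) = i} / μ {ω | i ≤ min (T₁ ω) (T₂ ω)})
        * (μ {ω | T₂ ω < T₁ ω ∧ min (T₁ ω) (T₂ ω) = i} /
            μ {ω | min (T₁ ω) (T₂ ω) = i})
        * (∏ d' ∈ Finset.Icc 1 (d - 1),
            μ {ω | i + d' < T₁ ω ∧ min (T₁ ω) (T₂ ω) = i ∧ T₂ ω < T₁ ω} /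
              μ {ω | i + d' ≤ T₁ ω ∧ min (T₁ ω) (T₂ ω) = i ∧ T₂ ω < T₁ ω})
        * (μ {ω | T₁ ω = i + d ∧ min (T₁ ω) (T₂ ω) = i ∧ T₂ ω < T₁ ω} /
            μ {ω | i + d ≤ T₁ ω ∧ min (T₁ ω) (T₂ ω) = i ∧ T₂ ω < T₁ ω}) := by
  have pos : ∀ p : Ω → Prop,
      (∀ ω, i + d ≤ T₁ ω → min (T₁ ω) (T₂ ω) = i → T₂ ω < T₁ ω → p ω) → μ {ω | p ω} ≠ 0 :=
    fun p hp h => (hcond d hd le_rfl).ne' <| measure_mono_null (fun ω ⟨h₁, h₂, h₃⟩ => hp ω h₁ h₂ h₃) h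
  have hS1 : μ {ω | 1 ≤ min (T₁ ω) (T₂ ω)} = 1 := by
    simp [fun ω => le_min (hT₁1 ω) (hT₂1 ω)]
  have hS := measure_mul_prod_Ico_div μ (fun j => {ω | j ≤ min (T₁ ω) (T₂ ω)}) hi
    fun j hj => pos _ fun ω _ h _ => by simp only [Finset.mem_Ico] at hj; omega
  have hR := measure_mul_prod_Ico_div μ
    (fun k => {ω | i + k ≤ T₁ ω ∧ min (T₁ ω) (T₂ ω) = i ∧ T₂ ω < T₁ ω}) hd
    fun k hk => pos _ fun ω h₁ h₂ h₃ => by simp only [Finset.mem_Ico] at hk; omega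
  rw [hS1, one_mul] at hS
  simp only [Nat.add_one_le_iff, ← add_assoc] at hS hR
  have hR1 : {ω | T₂ ω < T₁ ω ∧ min (T₁ ω) (T₂ ω) = i}
      = {ω | i < T₁ ω ∧ min (T₁ ω) (T₂ ω) = i ∧ T₂ ω < T₁ ω} := by
    ext ω; simp only [Set.mem_ofPred_eq]; omega
  have hevent : {ω | T₁ ω = i + d ∧ T₂ ω = i}
      = {ω | T₁ ω = i + d ∧ min (T₁ ω) (T₂ ω) = i ∧ T₂ ω < T₁ ω} := by
    ext ω; simp only [Set.mem_ofPred_eq]; omega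
  rw [Finset.Icc_sub_one_right_eq_Ico_of_not_isMin (by simpa using Nat.one_le_iff_ne_zero.1 hi),
    Finset.Icc_sub_one_right_eq_Ico_of_not_isMin (by simpa using Nat.one_le_iff_ne_zero.1 hd), hS, hR1, hevent,
    ENNReal.mul_div_cancel (pos _ fun ω _ h _ => h.ge) (measure_ne_top μ _),
    ENNReal.mul_div_cancel (pos _ fun ω _ h _ => h) (measure_ne_top μ _), hR,
    ENNReal.mul_div_cancel (pos _ fun ω h₁ h₂ h₃ => ⟨h₁, h₂, h₃⟩) (measure_ne_top μ _)]

/-- Equation (1) of Section 4: for a time-discrete bivariate survival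
distribution on `{1,2,...}²`, with `T* = min T₁ T₂` and `ε = 1` meaning
`T₁ > T₂`, and integers `i, d ≥ 1`, under the stated positivity conditions,
`P{T₁ = i+d, T₂ = i}` factors as
`(∏_{j=1}^{i-1} P{T* > j}/P{T* ≥ j}) ⬝ (P{T* = i}/P{T* ≥ i})
  ⬝ P{ε = 1 | T* = i}
  ⬝ (∏_{d'=1}^{d-1} P{T₁ > i+d' | T* = i, ε = 1}/P{T₁ ≥ i+d' | T* = i, ε = 1})
  ⬝ (P{T₁ = i+d | T* = i, ε = 1}/P{T₁ ≥ i+d | T* = i, ε = 1})`,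
where the conditional probabilities are written as ratios. -/
theorem stmt12 {Ω : Type*} [MeasurableSpace Ω] (μ : Measure Ω) [IsProbabilityMeasure μ]
    (T₁ T₂ : Ω → ℕ) (hT₁1 : ∀ ω, 1 ≤ T₁ ω) (hT₂1 : ∀ ω, 1 ≤ T₂ ω)
    (i d : ℕ) (hi : 1 ≤ i) (hd : 1 ≤ d)
    (hstar : ∀ j, 1 ≤ j → j ≤ i → 0 < μ {ω | j ≤ min (T₁ ω) (T₂ ω)})
    (heps : 0 < μ {ω | T₂ ω < T₁ ω ∧ min (T₁ ω) (T₂ ω) = i})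
    (hcond : ∀ d', 1 ≤ d' → d' ≤ d →
      0 < μ {ω | i + d' ≤ T₁ ω ∧ min (T₁ ω) (T₂ ω) = i ∧ T₂ ω < T₁ ω}) :
    μ {ω | T₁ ω = i + d ∧ T₂ ω = i}
      = (∏ j ∈ Finset.Icc 1 (i - 1),
            μ {ω | j < min (T₁ ω) (T₂ ω)} / μ {ω | j ≤ min (T₁ ω) (T₂ ω)})
        * (μ {ω | min (T₁ ω) (T₂ ω) = i} / μ {ω | i ≤ min (T₁ ω) (T₂ ω)})
        * (μ {ω | T₂ ω < T₁ ω ∧ min (T₁ ω) (T₂ ω) = i} /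
            μ {ω | min (T₁ ω) (T₂ ω) = i})
        * (∏ d' ∈ Finset.Icc 1 (d - 1),
            μ {ω | i + d' < T₁ ω ∧ min (T₁ ω) (T₂ ω) = i ∧ T₂ ω < T₁ ω} /
              μ {ω | i + d' ≤ T₁ ω ∧ min (T₁ ω) (T₂ ω) = i ∧ T₂ ω < T₁ ω})
        * (μ {ω | T₁ ω = i + d ∧ min (T₁ ω) (T₂ ω) = i ∧ T₂ ω < T₁ ω} /
            μ {ω | i + d ≤ T₁ ω ∧ min (T₁ ω) (T₂ ω) = i ∧ T₂ ω < T₁ ω}) :=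
  stmt12_general μ T₁ T₂ hT₁1 hT₂1 i d hi hd hcond
end

section
/- Let P and P' be probability measures on ℝ² supported on {1,2,3,...} × {1,2,3,...}, and let G be a probability measure on ℝ² whose two coordinate marginals are atomless and which satisfies: for every (x,y) ∈ ℝ², G({(x',y') : x' > x and y' > y}) > 0. Let (T₁,T₂) ~ P (resp. P') and (C₁,C₂) ~ G be independent, and define Z_j = min(T_j,C_j), Δ_j = 1{T_j ≤ C_j} for j = 1,2. If the law of (Z₁, Δ₁, Z₂, Δ₂) under P ⊗ G equals the law of (Z₁, Δ₁, Z₂, Δ₂) under P' ⊗ G, then P = P'. -/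
/-!
The observation `(a, 1, b, 1)` occurs exactly when `T = (a, b)` and `C ≥ (a, b)` coordinatewise,
so the law of the observables gives it mass `P {(a, b)} * G (Ici (a, b))`. The second factor is
nonzero by the support condition on `G`, hence `P` and `P'` have the same atoms; both are
concentrated on the countable grid `{1, 2, ...}²`, so they are determined by their atoms.
-/

open MeasureTheory

theorem MeasureTheory.Measure.ext_of_singleton_of_ae_mem {α : Type*} [MeasurableSpace α]
    [MeasurableSingletonClass α] {μ ν : Measure α} {S : Set α} (hS : S.Countable)
    (hμ : ∀ᵐ x ∂μ, x ∈ S) (hν : ∀ᵐ x ∂ν, x ∈ S) (h : ∀ x ∈ S, μ {x} = ν {x}) : μ = ν := by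
  rw [← Measure.restrict_eq_self_of_ae_mem hμ, ← Measure.restrict_eq_self_of_ae_mem hν]
  ext A hA
  have hAS : (A ∩ S).Countable := hS.mono Set.inter_subset_right
  have hsum (ρ : Measure α) : ρ (A ∩ S) = ∑' x : ↥(A ∩ S), ρ {(x : α)} :=
    (tsum_measure_preimage_singleton hAS (f := id) fun _ _ ↦ measurableSet_singleton _).symm
  rw [Measure.restrict_apply hA, Measure.restrict_apply hA, hsum, hsum]
  exact tsum_congr fun x ↦ h x x.2.2

theorem countable_positive_lattice :
    {p : ℝ × ℝ | (∃ n : ℕ, 1 ≤ n ∧ p.1 = n) ∧ (∃ m : ℕ, 1 ≤ m ∧ p.2 = m)}.Countable := by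
  refine (Set.countable_range fun p : ℕ × ℕ ↦ ((p.1 : ℝ), (p.2 : ℝ))).mono ?_
  rintro ⟨x, y⟩ ⟨⟨n, -, rfl⟩, ⟨m, -, rfl⟩⟩
  exact ⟨(n, m), rfl⟩

/-- `q = ((T₁, T₂), (C₁, C₂)) ↦ (Z₁, Δ₁, Z₂, Δ₂)`. -/
noncomputable def censoredObs (q : (ℝ × ℝ) × (ℝ × ℝ)) : ℝ × ℝ × ℝ × ℝ :=
  (min q.1.1 q.2.1, if q.1.1 ≤ q.2.1 then 1 else 0,
    min q.1.2 q.2.2, if q.1.2 ≤ q.2.2 then 1 else 0)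

theorem measurable_censoredObs : Measurable censoredObs := by
  have hle₁ : MeasurableSet {q : (ℝ × ℝ) × (ℝ × ℝ) | q.1.1 ≤ q.2.1} :=
    measurableSet_le measurable_fst.fst measurable_snd.fst
  have hle₂ : MeasurableSet {q : (ℝ × ℝ) × (ℝ × ℝ) | q.1.2 ≤ q.2.2} :=
    measurableSet_le measurable_fst.snd measurable_snd.snd
  unfold censoredObs
  refine .prodMk ?_ (.prodMk ?_ (.prodMk ?_ ?_))
  · exact measurable_fst.fst.min measurable_snd.fst
  · exact Measurable.ite hle₁ measurable_const measurable_const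
  · exact measurable_fst.snd.min measurable_snd.snd
  · exact Measurable.ite hle₂ measurable_const measurable_const

theorem censoredObs_preimage_uncensored (a b : ℝ) :
    censoredObs ⁻¹' {(a, 1, b, 1)} = {(a, b)} ×ˢ Set.Ici (a, b) := by
  ext ⟨⟨t₁, t₂⟩, ⟨c₁, c₂⟩⟩
  simp only [censoredObs, Set.mem_preimage, Set.mem_singleton_iff, Prod.mk.injEq, Set.mem_prod,
    Set.mem_Ici, Prod.mk_le_mk]
  constructor
  · rintro ⟨h₁, hδ₁, h₂, hδ₂⟩
    have ht₁ : t₁ ≤ c₁ := by by_contra h; simp [h] at hδ₁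
    have ht₂ : t₂ ≤ c₂ := by by_contra h; simp [h] at hδ₂
    rw [min_eq_left ht₁] at h₁
    rw [min_eq_left ht₂] at h₂
    subst h₁ h₂
    exact ⟨⟨rfl, rfl⟩, ht₁, ht₂⟩
  · rintro ⟨⟨rfl, rfl⟩, ht₁, ht₂⟩
    simp [ht₁, ht₂]

theorem map_censoredObs_uncensored (P G : Measure (ℝ × ℝ)) [SFinite G] (a b : ℝ) :
    (P.prod G).map censoredObs {(a, 1, b, 1)} = P {(a, b)} * G (Set.Ici (a, b)) := by
  rw [Measure.map_apply measurable_censoredObs (measurableSet_singleton _),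
    censoredObs_preimage_uncensored, Measure.prod_prod]

theorem measure_singleton_eq_of_map_censoredObs_eq {P P' G : Measure (ℝ × ℝ)}
    [IsFiniteMeasure G] (hG : ∀ x, G (Set.Ici x) ≠ 0)
    (hobs : (P.prod G).map censoredObs = (P'.prod G).map censoredObs) (x : ℝ × ℝ) :
    P {x} = P' {x} := by
  have h := map_censoredObs_uncensored P G x.1 x.2
  rw [hobs, map_censoredObs_uncensored] at h
  exact (ENNReal.mul_left_inj (hG x) (measure_ne_top G _)).1 h.symm

theorem stmt13_general (P P' G : Measure (ℝ × ℝ))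
    [IsProbabilityMeasure P] [IsProbabilityMeasure P'] [IsProbabilityMeasure G]
    (hP : P {p | (∃ n : ℕ, 1 ≤ n ∧ p.1 = n) ∧ (∃ m : ℕ, 1 ≤ m ∧ p.2 = m)} = 1)
    (hP' : P' {p | (∃ n : ℕ, 1 ≤ n ∧ p.1 = n) ∧ (∃ m : ℕ, 1 ≤ m ∧ p.2 = m)} = 1)
    (hGsupp : ∀ x y : ℝ, 0 < G {c | x < c.1 ∧ y < c.2})
    (φ : (ℝ × ℝ) × (ℝ × ℝ) → ℝ × ℝ × ℝ × ℝ)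
    (hφ : φ = fun q => (min q.1.1 q.2.1, if q.1.1 ≤ q.2.1 then (1 : ℝ) else 0,
        min q.1.2 q.2.2, if q.1.2 ≤ q.2.2 then (1 : ℝ) else 0))
    (hobs : (P.prod G).map φ = (P'.prod G).map φ) :
    P = P' := by
  have hS := countable_positive_lattice
  have hG : ∀ x : ℝ × ℝ, G (Set.Ici x) ≠ 0 := fun x ↦
    ((hGsupp x.1 x.2).trans_le <| measure_mono fun _ hc ↦ Prod.le_def.2 ⟨hc.1.le, hc.2.le⟩).ne'
  subst hφ
  exact Measure.ext_of_singleton_of_ae_mem hS ((mem_ae_iff_prob_eq_one hS.measurableSet).2 hP)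
    ((mem_ae_iff_prob_eq_one hS.measurableSet).2 hP')
    fun x _ ↦ measure_singleton_eq_of_map_censoredObs_eq hG hobs x

/-- Identifiability (Section 3): for survival distributions `P, P'` supported
on `{1,2,...}²` and a censoring distribution `G` with atomless marginals that
charges every open upper quadrant, if the laws of the observables
`(Z₁, Δ₁, Z₂, Δ₂)` (with `Zⱼ = min Tⱼ Cⱼ`, `Δⱼ = 1{Tⱼ ≤ Cⱼ}`) under `P ⊗ G`
and `P' ⊗ G` coincide, then `P = P'`. -/
theorem stmt13 (P P' G : Measure (ℝ × ℝ))
    [IsProbabilityMeasure P] [IsProbabilityMeasure P'] [IsProbabilityMeasure G]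
    (hP : P {p | (∃ n : ℕ, 1 ≤ n ∧ p.1 = n) ∧ (∃ m : ℕ, 1 ≤ m ∧ p.2 = m)} = 1)
    (hP' : P' {p | (∃ n : ℕ, 1 ≤ n ∧ p.1 = n) ∧ (∃ m : ℕ, 1 ≤ m ∧ p.2 = m)} = 1)
    (hG1 : ∀ x : ℝ, G {c | c.1 = x} = 0)
    (hG2 : ∀ y : ℝ, G {c | c.2 = y} = 0)
    (hGsupp : ∀ x y : ℝ, 0 < G {c | x < c.1 ∧ y < c.2})
    (φ : (ℝ × ℝ) × (ℝ × ℝ) → ℝ × ℝ × ℝ × ℝ)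
    (hφ : φ = fun q => (min q.1.1 q.2.1, if q.1.1 ≤ q.2.1 then (1 : ℝ) else 0,
        min q.1.2 q.2.2, if q.1.2 ≤ q.2.2 then (1 : ℝ) else 0))
    (hobs : (P.prod G).map φ = (P'.prod G).map φ) :
    P = P' :=
  stmt13_general P P' G hP hP' hGsupp φ hφ hobs
end

section
/- Let ((T₁ᵢ, T₂ᵢ, C₁ᵢ, C₂ᵢ))_{i≥1} be an i.i.d. sequence where each (T₁ᵢ,T₂ᵢ) has the uniform distribution P₀ on A = ([1,2]×[1,2]) ∪ ([2,3]×[2,3]) ⊂ ℝ², each (C₁ᵢ,C₂ᵢ) is independent of (T₁ᵢ,T₂ᵢ) with distribution giving mass 1/3 to each of (1,3), (3,1), (4,4), and Z_{j,i} = min(T_{j,i}, C_{j,i}), Δ_{j,i} = 1{T_{j,i} ≤ C_{j,i}}. Then, almost surely, (1/n) ∑_{i=1}^n [ (1/2)·1{Δ₁ᵢ = 0, Δ₂ᵢ = 1, Z₂ᵢ ∈ [2,3]} + (1/2)·1{Δ₁ᵢ = 1, Δ₂ᵢ = 0, Z₁ᵢ ∈ [1,2]} ] converges to 1/6 as n →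 ∞. -/
open MeasureTheory ProbabilityTheory Filter

open scoped Classical

/-- The uniform distribution on `A = [1,2]×[1,2] ∪ [2,3]×[2,3]` (normalized
two-dimensional Lebesgue measure on `A`; `A` has Lebesgue measure `2`). -/
noncomputable def pruittP₀ : Measure (ℝ × ℝ) :=
  (2 : ENNReal)⁻¹ •
    (volume.restrict
      ((Set.Icc (1 : ℝ) 2 ×ˢ Set.Icc (1 : ℝ) 2) ∪
        (Set.Icc (2 : ℝ) 3 ×ˢ Set.Icc (2 : ℝ) 3)))

/-- The censoring distribution giving mass `1/3` to each of the points
`(1,3)`, `(3,1)`, `(4,4)`. -/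
noncomputable def pruittG : Measure (ℝ × ℝ) :=
  (3 : ENNReal)⁻¹ •
    (Measure.dirac ((1 : ℝ), (3 : ℝ)) + Measure.dirac ((3 : ℝ), (1 : ℝ)) +
      Measure.dirac ((4 : ℝ), (4 : ℝ)))


open Set

/-!
The summand is a bounded measurable function of the i.i.d. vectors `((T₁ᵢ, T₂ᵢ), (C₁ᵢ, C₂ᵢ))`,
so by the strong law of large numbers the averages converge almost surely to its mean under
`P₀ ⊗ G`. Off the boundaries of the two squares, a `P₀`-null set, only one censoring point
contributes: for `T` in the open lower square it is `(3,1)`, through `Δ₁ = 1, Δ₂ = 0, Z₁ ∈ [1,2]`,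
and for `T` in the open upper square it is `(1,3)`, through `Δ₁ = 0, Δ₂ = 1, Z₂ ∈ [2,3]`; either
way the summand is `1/2` with `G`-probability `1/3`, so its mean is `1/6`.
-/

theorem ae_tendsto_average_comp_of_iIndepFun {Ω E : Type*} [MeasurableSpace Ω]
    [MeasurableSpace E] {μ : Measure Ω} {ν : Measure E} {X : ℕ → Ω → E}
    (hX : ∀ i, AEMeasurable (X i) μ) (hlaw : ∀ i, μ.map (X i) = ν) (hindep : iIndepFun X μ)
    {f : E → ℝ} (hf : Measurable f) (hfi : Integrable f ν) :
    ∀ᵐ ω ∂μ, Tendsto (fun n : ℕ => (∑ i ∈ Finset.range n, f (X i ω)) / n) atTop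
      (nhds (∫ x, f x ∂ν)) := by
  have hident (i : ℕ) : IdentDistrib (f ∘ X i) (f ∘ X 0) μ μ :=
    (IdentDistrib.mk (hX i) (hX 0) (by rw [hlaw, hlaw])).comp hf
  have hint : Integrable (f ∘ X 0) μ := by
    rw [← hlaw 0] at hfi
    exact hfi.comp_aemeasurable (hX 0)
  have hmean : μ[f ∘ X 0] = ∫ x, f x ∂ν := by
    rw [← hlaw 0, integral_map (hX 0) hf.aestronglyMeasurable]
    rfl
  have hlln := strong_law_ae_real (fun i => f ∘ X i) hint
    (fun i j hij => (hindep.comp (fun _ => f) (fun _ => hf)).indepFun hij) hident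
  rw [hmean] at hlln
  exact hlln

theorem Ioo_prod_Ioo_ae_eq_Icc_prod_Icc (a b c d : ℝ) :
    Ioo a b ×ˢ Ioo c d =ᵐ[volume] Icc a b ×ˢ Icc c d := by
  simpa only [interior_prod_eq, interior_Icc] using interior_ae_eq_of_null_frontier
    (((convex_Icc a b).prod (convex_Icc c d)).addHaar_frontier volume)

def pruittOpenSquares : Set (ℝ × ℝ) := Ioo 1 2 ×ˢ Ioo 1 2 ∪ Ioo 2 3 ×ˢ Ioo 2 3

theorem measurableSet_pruittOpenSquares : MeasurableSet pruittOpenSquares :=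
  (measurableSet_Ioo.prod measurableSet_Ioo).union (measurableSet_Ioo.prod measurableSet_Ioo)

theorem pruittP₀_eq_restrict_pruittOpenSquares :
    pruittP₀ = (2 : ENNReal)⁻¹ • volume.restrict pruittOpenSquares := by
  rw [pruittP₀, Measure.restrict_congr_set ((Ioo_prod_Ioo_ae_eq_Icc_prod_Icc 1 2 1 2).union
    (Ioo_prod_Ioo_ae_eq_Icc_prod_Icc 2 3 2 3)).symm, pruittOpenSquares]

theorem ae_pruittP₀_mem_pruittOpenSquares : ∀ᵐ t ∂pruittP₀, t ∈ pruittOpenSquares := by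
  rw [pruittP₀_eq_restrict_pruittOpenSquares]
  exact Measure.ae_smul_measure (ae_restrict_mem measurableSet_pruittOpenSquares) _

instance : IsProbabilityMeasure pruittP₀ := by
  constructor
  have hdisj : Disjoint (Ioo (1 : ℝ) 2 ×ˢ Ioo (1 : ℝ) 2) (Ioo (2 : ℝ) 3 ×ˢ Ioo (2 : ℝ) 3) :=
    disjoint_prod.2 (Or.inl (disjoint_left.2 fun _ hx hx' => lt_asymm hx.2 hx'.1))
  rw [pruittP₀_eq_restrict_pruittOpenSquares, Measure.smul_apply, Measure.restrict_apply_univ,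
    pruittOpenSquares, measure_union hdisj (measurableSet_Ioo.prod measurableSet_Ioo),
    Measure.volume_eq_prod, Measure.prod_prod, Measure.prod_prod]
  simp only [Real.volume_Ioo]
  norm_num
  exact ENNReal.inv_mul_cancel two_ne_zero ENNReal.ofNat_ne_top

instance : IsProbabilityMeasure pruittG := by
  constructor
  rw [pruittG, Measure.smul_apply, Measure.add_apply, Measure.add_apply]
  simp only [measure_univ, smul_eq_mul]
  norm_num
  exact ENNReal.inv_mul_cancel (by norm_num) (by norm_num)

theorem integral_pruittG (h : ℝ × ℝ → ℝ) :
    ∫ c, h c ∂pruittG = 3⁻¹ * (h (1, 3) + h (3, 1) + h (4, 4)) := by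
  have hint (a : ℝ × ℝ) : Integrable h (Measure.dirac a) := integrable_dirac enorm_lt_top
  rw [pruittG, integral_smul_measure, integral_add_measure ((hint _).add_measure (hint _)) (hint _),
    integral_add_measure (hint _) (hint _), integral_dirac, integral_dirac, integral_dirac,
    ENNReal.toReal_inv, smul_eq_mul]
  norm_num

noncomputable def pruittSummand (p : (ℝ × ℝ) × (ℝ × ℝ)) : ℝ :=
  (if ¬p.1.1 ≤ p.2.1 ∧ p.1.2 ≤ p.2.2 ∧ min p.1.2 p.2.2 ∈ Icc (2 : ℝ) 3 then 1 / 2 else 0) +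
    (if p.1.1 ≤ p.2.1 ∧ ¬p.1.2 ≤ p.2.2 ∧ min p.1.1 p.2.1 ∈ Icc (1 : ℝ) 2 then 1 / 2 else 0)

theorem measurable_pruittSummand : Measurable pruittSummand := by
  unfold pruittSummand
  refine .add (.ite ?_ measurable_const measurable_const) (.ite ?_ measurable_const measurable_const)
  · measurability
  · measurability

theorem integrable_pruittSummand : Integrable pruittSummand (pruittP₀.prod pruittG) :=
  .of_bound measurable_pruittSummand.aestronglyMeasurable 1 (.of_forall fun p => by
    unfold pruittSummand; split_ifs <;> norm_num)

theorem pruittSummand_censoring_sum_eq_half {t : ℝ × ℝ} (ht : t ∈ pruittOpenSquares) :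
    pruittSummand (t, (1, 3)) + pruittSummand (t, (3, 1)) + pruittSummand (t, (4, 4)) = 1 / 2 := by
  obtain ⟨t₁, t₂⟩ := t
  rcases ht with ⟨⟨h₁, h₁'⟩, h₂, h₂'⟩ | ⟨⟨h₁, h₁'⟩, h₂, h₂'⟩ <;>
  · simp only [pruittSummand, mem_Icc]
    grind

theorem integral_pruittSummand : ∫ p, pruittSummand p ∂(pruittP₀.prod pruittG) = 1 / 6 := by
  rw [integral_prod _ integrable_pruittSummand]
  calc ∫ t, ∫ c, pruittSummand (t, c) ∂pruittG ∂pruittP₀ = ∫ _, (1 / 6 : ℝ) ∂pruittP₀ :=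
        integral_congr_ae (ae_pruittP₀_mem_pruittOpenSquares.mono fun t ht => by
          dsimp only
          rw [integral_pruittG, pruittSummand_censoring_sum_eq_half ht]
          norm_num)
    _ = 1 / 6 := by simp

theorem stmt18_general {Ω : Type*} [MeasurableSpace Ω] (μ : Measure Ω)
    (T₁ T₂ C₁ C₂ : ℕ → Ω → ℝ)
    (hmeas : ∀ i, Measurable fun ω => ((T₁ i ω, T₂ i ω), (C₁ i ω, C₂ i ω)))
    (hlaw : ∀ i, μ.map (fun ω => ((T₁ i ω, T₂ i ω), (C₁ i ω, C₂ i ω)))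
      = pruittP₀.prod pruittG)
    (hindep : iIndepFun
      (fun i ω => ((T₁ i ω, T₂ i ω), (C₁ i ω, C₂ i ω))) μ) :
    ∀ᵐ ω ∂μ, Tendsto (fun n : ℕ =>
        (1 / (n : ℝ)) * ∑ i ∈ Finset.range n,
          ((if ¬T₁ i ω ≤ C₁ i ω ∧ T₂ i ω ≤ C₂ i ω ∧
              min (T₂ i ω) (C₂ i ω) ∈ Set.Icc (2 : ℝ) 3 then (1 / 2 : ℝ) else 0)
            + (if T₁ i ω ≤ C₁ i ω ∧ ¬T₂ i ω ≤ C₂ i ω ∧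
              min (T₁ i ω) (C₁ i ω) ∈ Set.Icc (1 : ℝ) 2 then (1 / 2 : ℝ) else 0)))
      atTop (nhds (1 / 6)) := by
  have hlln := ae_tendsto_average_comp_of_iIndepFun (fun i => (hmeas i).aemeasurable) hlaw hindep
    measurable_pruittSummand integrable_pruittSummand
  rw [integral_pruittSummand] at hlln
  filter_upwards [hlln] with ω hω
  simpa only [one_div, inv_mul_eq_div, pruittSummand] using hω

/-- Pruitt's example, law of large numbers: for i.i.d. data
`((T₁ᵢ,T₂ᵢ),(C₁ᵢ,C₂ᵢ)) ~ P₀ ⊗ G`, with `Z_{j,i} = min T_{j,i} C_{j,i}` and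
`Δ_{j,i} = 1{T_{j,i} ≤ C_{j,i}}`, almost surely
`(1/n) ∑_{i<n} [(1/2)·1{Δ₁ᵢ = 0, Δ₂ᵢ = 1, Z₂ᵢ ∈ [2,3]}
  + (1/2)·1{Δ₁ᵢ = 1, Δ₂ᵢ = 0, Z₁ᵢ ∈ [1,2]}] → 1/6`. -/
theorem stmt18 {Ω : Type*} [MeasurableSpace Ω] (μ : Measure Ω) [IsProbabilityMeasure μ]
    (T₁ T₂ C₁ C₂ : ℕ → Ω → ℝ)
    (hmeas : ∀ i, Measurable fun ω => ((T₁ i ω, T₂ i ω), (C₁ i ω, C₂ i ω)))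
    (hlaw : ∀ i, μ.map (fun ω => ((T₁ i ω, T₂ i ω), (C₁ i ω, C₂ i ω)))
      = pruittP₀.prod pruittG)
    (hindep : iIndepFun
      (fun i ω => ((T₁ i ω, T₂ i ω), (C₁ i ω, C₂ i ω))) μ) :
    ∀ᵐ ω ∂μ, Tendsto (fun n : ℕ =>
        (1 / (n : ℝ)) * ∑ i ∈ Finset.range n,
          ((if ¬T₁ i ω ≤ C₁ i ω ∧ T₂ i ω ≤ C₂ i ω ∧
              min (T₂ i ω) (C₂ i ω) ∈ Set.Icc (2 : ℝ) 3 then (1 / 2 : ℝ) else 0)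
            + (if T₁ i ω ≤ C₁ i ω ∧ ¬T₂ i ω ≤ C₂ i ω ∧
              min (T₁ i ω) (C₁ i ω) ∈ Set.Icc (1 : ℝ) 2 then (1 / 2 : ℝ) else 0)))
      atTop (nhds (1 / 6)) :=
  stmt18_general μ T₁ T₂ C₁ C₂ hmeas hlaw hindep
end

section
/- Let Y be a measurable space in which every singleton {t} is measurable, let X be a nonempty measurable space, and for each t ∈ Y let μ_t be a probability measure on X. Let μ = ⊗_{t ∈ Y} μ_t be the product probability measure on the function space X^Y equipped with the product σ-algebra. Let Γ ⊂ X^Y be the set of all measurable functions from Y to X. Then the μ-outer measure of Γ equals 1; equivalently, every set E in the product σ-algebra with Γ ⊆ E satisfies μ(E) = 1. -/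
open MeasureTheory

/-- Every set measurable for the product σ-algebra depends on only countably many
coordinates. -/
lemma aux_countable_dep {X Y : Type*} [MeasurableSpace X] [MeasurableSpace Y]
    {E : Set (Y → X)} (hE : MeasurableSet E) :
    ∃ T : Set Y, T.Countable ∧
      ∀ g h : Y → X, (∀ t ∈ T, g t = h t) → g ∈ E → h ∈ E := by
  let m : MeasurableSpace (Y → X) :=
    { MeasurableSet' := fun E => ∃ T : Set Y, T.Countable ∧
        ∀ g h : Y → X, (∀ t ∈ T, g t = h t) → g ∈ E → h ∈ E
      measurableSet_empty := ⟨∅, Set.countable_empty, fun _ _ _ h => h⟩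
      measurableSet_compl := fun E ⟨T, hTc, hT⟩ =>
        ⟨T, hTc, fun g h hgh hg hh =>
          hg (hT h g (fun t ht => (hgh t ht).symm) hh)⟩
      measurableSet_iUnion := fun f hf => by
        choose T hTc hT using hf
        refine ⟨⋃ n, T n, Set.countable_iUnion hTc, fun g h hgh hg => ?_⟩
        obtain ⟨n, hn⟩ := Set.mem_iUnion.1 hg
        exact Set.mem_iUnion.2
          ⟨n, hT n g h (fun t ht => hgh t (Set.mem_iUnion.2 ⟨n, ht⟩)) hn⟩ }
  have hle : (MeasurableSpace.pi : MeasurableSpace (Y → X)) ≤ m := by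
    refine iSup_le fun t => ?_
    intro E hEt
    obtain ⟨A, _, rfl⟩ := hEt
    refine ⟨{t}, Set.countable_singleton t, fun g h hgh hg => ?_⟩
    have : g t = h t := hgh t rfl
    simpa [Set.mem_preimage, ← this] using hg
  exact hle E hE

/-- Appendix lemma: let `Y` be a measurable space with measurable singletons,
`X` a nonempty measurable space, `(μt t)_{t ∈ Y}` probability measures on `X`,
and `μ` the product probability measure on `X^Y` (characterized on measurable
cylinders by `μ {g | ∀ t ∈ s, g t ∈ f t} = ∏ t ∈ s, μt t (f t)` for finite
`s ⊆ Y`). Then the set `Γ` of measurable functions `Y → X` has `μ`-outer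
measure one; equivalently, every set `E` of the product σ-algebra containing
`Γ` has `μ E = 1`. -/
theorem stmt19 {X Y : Type*} [MeasurableSpace X] [MeasurableSpace Y] [Nonempty X]
    (hsing : ∀ t : Y, MeasurableSet ({t} : Set Y))
    (μt : Y → Measure X) (hprob : ∀ t, IsProbabilityMeasure (μt t))
    (μ : Measure (Y → X)) [IsProbabilityMeasure μ]
    (hcyl : ∀ (s : Finset Y) (f : Y → Set X), (∀ t, MeasurableSet (f t)) →
      μ {g : Y → X | ∀ t ∈ s, g t ∈ f t} = ∏ t ∈ s, μt t (f t)) :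
    μ {g : Y → X | Measurable g} = 1 ∧
      ∀ E : Set (Y → X), MeasurableSet E → {g : Y → X | Measurable g} ⊆ E →
        μ E = 1 := by
  classical
  haveI : MeasurableSingletonClass Y := ⟨hsing⟩
  obtain ⟨x₀⟩ := ‹Nonempty X›
  have key : ∀ E : Set (Y → X), MeasurableSet E →
      {g : Y → X | Measurable g} ⊆ E → μ E = 1 := by
    intro E hE hΓE
    by_contra hne
    have hc0 : μ Eᶜ ≠ 0 := by
      intro h0
      exact hne ((prob_compl_eq_zero_iff hE).1 h0)
    obtain ⟨g, hg⟩ : Eᶜ.Nonempty := nonempty_of_measure_ne_zero hc0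
    obtain ⟨T, hTc, hT⟩ := aux_countable_dep (X := X) (Y := Y) hE.compl
    set h : Y → X := fun t => if t ∈ T then g t else x₀ with hdef
    have hhE : h ∈ Eᶜ := hT g h (fun t ht => by simp [hdef, ht]) hg
    have hmeas : Measurable h := by
      intro A hA
      have heq : h ⁻¹' A = (T ∩ g ⁻¹' A) ∪ (Tᶜ ∩ {t : Y | x₀ ∈ A}) := by
        ext t
        by_cases ht : t ∈ T <;> simp [hdef, ht]
      rw [heq]
      have h1 : MeasurableSet (T ∩ g ⁻¹' A) :=
        (hTc.mono Set.inter_subset_left).measurableSet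
      have h2 : MeasurableSet ({t : Y | x₀ ∈ A}) := by
        by_cases hx : x₀ ∈ A
        · simpa [hx] using MeasurableSet.univ
        · simpa [hx] using MeasurableSet.empty
      exact h1.union (hTc.measurableSet.compl.inter h2)
    exact hhE (hΓE hmeas)
  refine ⟨?_, key⟩
  refine le_antisymm prob_le_one ?_
  rw [measure_eq_iInf]
  exact le_iInf fun t => le_iInf fun hΓt => le_iInf fun htm => (key t htm hΓt).ge
end
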